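/- Björck orthogonalization step: for a matrix W with ‖I - W^T W‖₂ < 1, the iteration W ← W(I + (1/2)(I - W^T W)) converges to the nearest matrix with orthonormal columns; in particular, if W = UΣV^T is an SVD with all singular values in (0, √3), then each iterate has the same singular vectors and singular values σ ↦ σ(3 - σ²)/2, and the singular values converge to 1. -/

import Mathlib

/-!
If `W = U Σ Vᵀ` with `Uᵀ U = 1` and `V` orthogonal, then `Wᵀ W = V Σ² Vᵀ`, so one Björck step
sends `W` to `U g(Σ) Vᵀ`. The map `g` sends `(0, √3)` into `(0, 1]`, where `x ≤ g x ≤ 1`; the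
iterates therefore increase to a fixed point of `g` in `(0, 1]`, which can only be `1`.

For `Q` with orthonormal columns, `‖W - Q‖²_F = ‖W‖²_F + n - 2 tr(Wᵀ Q)` and
`tr(Wᵀ Q) = ∑ σᵢ (Uᵀ Q V)ᵢᵢ ≤ ∑ σᵢ`, because `Uᵀ Q V` is a product of two matrices with
orthonormal columns; equality holds at `Q = U Vᵀ`.
-/

open Matrix Filter

namespace Stmt16

/-- Action of one Björck orthogonalization step on a singular value. -/
noncomputable def g (σ : ℝ) : ℝ := σ * (3 - σ ^ 2) / 2

noncomputable def bjorck (m nn : ℕ) (W : Matrix (Fin m) (Fin nn) ℝ) :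
    ℕ → Matrix (Fin m) (Fin nn) ℝ
  | 0 => W
  | k + 1 =>
      bjorck m nn W k *
        (1 + (1 / 2 : ℝ) • (1 - (bjorck m nn W k)ᵀ * bjorck m nn W k))

open Set

theorem continuous_g : Continuous g := by unfold g; fun_prop

theorem mapsTo_g : MapsTo g (Ioo 0 (Real.sqrt 3)) (Ioc 0 1) := by
  rintro x ⟨hx0, hx3⟩
  have hx3' : x ^ 2 < 3 := (Real.lt_sqrt hx0.le).1 hx3
  refine ⟨?_, ?_⟩ <;> unfold g
  · exact div_pos (mul_pos hx0 (by linarith)) two_pos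
  · nlinarith [sq_nonneg (x - 1)]

theorem le_g {x : ℝ} (hx : x ∈ Icc (0 : ℝ) 1) : x ≤ g x := by
  unfold g; nlinarith [hx.1, hx.2]

theorem eq_one_of_g_eq_self {x : ℝ} (hx : 0 < x) (h : g x = x) : x = 1 := by
  unfold g at h
  have : (x - 1) * (x + 1) = 0 := by nlinarith
  rcases mul_eq_zero.1 this with h1 | h1 <;> linarith

theorem tendsto_iterate_g_of_mem_Ioc {x : ℝ} (hx : x ∈ Ioc (0 : ℝ) 1) :
    Tendsto (fun k => g^[k] x) atTop (nhds 1) := by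
  have hmaps : MapsTo g (Ioc 0 1) (Ioc 0 1) :=
    mapsTo_g.mono_left (Ioc_subset_Ioo_right ((Real.lt_sqrt zero_le_one).2 (by norm_num)))
  have hmem : ∀ k, g^[k] x ∈ Ioc (0 : ℝ) 1 := fun k => hmaps.iterate k hx
  have hmono : Monotone fun k => g^[k] x := monotone_nat_of_le_succ fun k => by
    rw [Function.iterate_succ_apply']
    exact le_g (Ioc_subset_Icc_self (hmem k))
  have hbdd : BddAbove (range fun k => g^[k] x) := ⟨1, forall_mem_range.2 fun k => (hmem k).2⟩
  have hlim := tendsto_atTop_ciSup hmono hbdd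
  have hpos : 0 < ⨆ k, g^[k] x := hx.1.trans_le (le_ciSup hbdd 0)
  rwa [eq_one_of_g_eq_self hpos
    (isFixedPt_of_tendsto_iterate hlim continuous_g.continuousAt)] at hlim

theorem tendsto_iterate_g {x : ℝ} (hx : x ∈ Ioo 0 (Real.sqrt 3)) :
    Tendsto (fun k => g^[k] x) atTop (nhds 1) :=
  (tendsto_add_atTop_iff_nat 1).1 <| by
    simpa only [Function.iterate_succ_apply] using tendsto_iterate_g_of_mem_Ioc (mapsTo_g hx)

section Orthonormal

variable {l m n : Type*} [Fintype m]

theorem transpose_mul_self_mul [Fintype n] [DecidableEq n] [DecidableEq l] {A : Matrix m n ℝ}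
    {B : Matrix n l ℝ} (hA : Aᵀ * A = 1) (hB : Bᵀ * B = 1) : (A * B)ᵀ * (A * B) = 1 := by
  rw [transpose_mul, Matrix.mul_assoc, ← Matrix.mul_assoc Aᵀ, hA, Matrix.one_mul, hB]

theorem transpose_mul_apply_self_le_one [DecidableEq n] {A B : Matrix m n ℝ}
    (hA : Aᵀ * A = 1) (hB : Bᵀ * B = 1) (i : n) : (Aᵀ * B) i i ≤ 1 := by
  have hcol : ∀ C : Matrix m n ℝ, Cᵀ * C = 1 → ∑ k, C k i ^ 2 = 1 := fun C hC => by
    simpa [Matrix.mul_apply, sq] using congrFun (congrFun hC i) i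
  calc (Aᵀ * B) i i = ∑ k, A k i * B k i := by simp [Matrix.mul_apply]
    _ ≤ ∑ k, (A k i ^ 2 / 2 + B k i ^ 2 / 2) :=
        Finset.sum_le_sum fun k _ => by nlinarith [sq_nonneg (A k i - B k i)]
    _ = 1 := by
        rw [Finset.sum_add_distrib, ← Finset.sum_div, ← Finset.sum_div, hcol A hA, hcol B hB]
        norm_num

theorem sum_sum_mul_eq_trace [Fintype n] (A B : Matrix m n ℝ) :
    ∑ i, ∑ j, A i j * B i j = trace (Aᵀ * B) := by
  rw [Finset.sum_comm]; simp [trace, Matrix.mul_apply]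

theorem sum_sum_sq_sub_of_orthonormal [Fintype n] [DecidableEq n] (W : Matrix m n ℝ)
    {A : Matrix m n ℝ} (hA : Aᵀ * A = 1) :
    ∑ i, ∑ j, (W i j - A i j) ^ 2
      = ∑ i, ∑ j, W i j ^ 2 + Fintype.card n - 2 * trace (Wᵀ * A) := by
  have hA' : ∑ i, ∑ j, A i j ^ 2 = Fintype.card n := by
    simp only [sq, sum_sum_mul_eq_trace, hA, trace_one]
  simp only [sub_sq, Finset.sum_add_distrib, Finset.sum_sub_distrib, mul_assoc, ← Finset.mul_sum,
    sum_sum_mul_eq_trace W A, hA']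
  ring

end Orthonormal

section SVD

variable {m n : Type*} [Fintype n] [DecidableEq n] {U : Matrix m n ℝ} {V : Matrix n n ℝ}

noncomputable def bjorckStep [Fintype m] (A : Matrix m n ℝ) : Matrix m n ℝ :=
  A * (1 + (1 / 2 : ℝ) • (1 - Aᵀ * A))

theorem bjorckStep_svd [Fintype m] (hU : Uᵀ * U = 1) (hV : Vᵀ * V = 1) (d : n → ℝ) :
    bjorckStep (U * diagonal d * Vᵀ) = U * diagonal (fun i => g (d i)) * Vᵀ := by
  have hcube : U * diagonal d * Vᵀ * ((U * diagonal d * Vᵀ)ᵀ * (U * diagonal d * Vᵀ))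
      = U * diagonal (fun i => d i ^ 3) * Vᵀ := by
    simp only [transpose_mul, transpose_transpose, diagonal_transpose, Matrix.mul_assoc]
    rw [← Matrix.mul_assoc Vᵀ V, hV, Matrix.one_mul, ← Matrix.mul_assoc Uᵀ U, hU, Matrix.one_mul,
      ← Matrix.mul_assoc (diagonal d), ← Matrix.mul_assoc (diagonal d * diagonal d),
      diagonal_mul_diagonal, diagonal_mul_diagonal]
    simp only [pow_three, mul_assoc]
  have hg : diagonal (fun i => g (d i))
      = diagonal d + (1 / 2 : ℝ) • (diagonal d - diagonal (fun i => d i ^ 3)) := by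
    rw [diagonal_sub, ← diagonal_smul, diagonal_add]
    congr 1; ext i; simp only [g, Pi.smul_apply, smul_eq_mul]; ring
  rw [bjorckStep, Matrix.mul_add, Matrix.mul_one, Matrix.mul_smul, Matrix.mul_sub, Matrix.mul_one,
    hcube, hg]
  simp only [Matrix.mul_add, Matrix.add_mul, Matrix.mul_smul, Matrix.smul_mul, Matrix.mul_sub,
    Matrix.sub_mul]

theorem trace_transpose_svd_mul [Fintype m] (σ : n → ℝ) (A : Matrix m n ℝ) :
    trace ((U * diagonal σ * Vᵀ)ᵀ * A) = ∑ i, σ i * (Uᵀ * A * V) i i := by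
  simp only [transpose_mul, transpose_transpose, diagonal_transpose, Matrix.mul_assoc]
  rw [trace_mul_comm, Matrix.mul_assoc, Matrix.mul_assoc]
  simp [trace, diagonal_mul]

theorem trace_transpose_svd_mul_le [Fintype m] (hU : Uᵀ * U = 1) (hV : Vᵀ * V = 1)
    {σ : n → ℝ} (hσ : ∀ i, 0 ≤ σ i) {Q : Matrix m n ℝ} (hQ : Qᵀ * Q = 1) :
    trace ((U * diagonal σ * Vᵀ)ᵀ * Q) ≤ trace ((U * diagonal σ * Vᵀ)ᵀ * (U * Vᵀ)) := by
  have hP : Uᵀ * (U * Vᵀ) * V = 1 := by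
    rw [← Matrix.mul_assoc, hU, Matrix.one_mul, hV]
  rw [trace_transpose_svd_mul, trace_transpose_svd_mul, hP]
  refine Finset.sum_le_sum fun i _ => ?_
  rw [Matrix.one_apply_eq, mul_one, Matrix.mul_assoc]
  exact mul_le_of_le_one_right (hσ i)
    (transpose_mul_apply_self_le_one hU (transpose_mul_self_mul hQ hV) i)

theorem tendsto_svd_of_tendsto {d : ℕ → n → ℝ} (h : ∀ i, Tendsto (fun k => d k i) atTop (nhds 1)) :
    Tendsto (fun k => U * diagonal (d k) * Vᵀ) atTop (nhds (U * Vᵀ)) := by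
  have hcont : Continuous fun e : n → ℝ => U * diagonal e * Vᵀ := by fun_prop
  simpa only [Function.comp_def, diagonal_one', Matrix.mul_one] using
    (hcont.tendsto 1).comp (tendsto_pi_nhds.2 h)

end SVD

theorem bjorck_succ (m nn : ℕ) (W : Matrix (Fin m) (Fin nn) ℝ) (k : ℕ) :
    bjorck m nn W (k + 1) = bjorckStep (bjorck m nn W k) := rfl

theorem bjorck_svd {m nn : ℕ} {U : Matrix (Fin m) (Fin nn) ℝ} {V : Matrix (Fin nn) (Fin nn) ℝ}
    (hU : Uᵀ * U = 1) (hV : Vᵀ * V = 1) (σ : Fin nn → ℝ) (k : ℕ) :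
    bjorck m nn (U * diagonal σ * Vᵀ) k = U * diagonal (fun i => g^[k] (σ i)) * Vᵀ := by
  induction k with
  | zero => rfl
  | succ k ih => simp only [bjorck_succ, ih, bjorckStep_svd hU hV, Function.iterate_succ_apply']

/-- Let `W = U Σ Vᵀ` be an SVD (`Uᵀ U = I`, `V` orthogonal,
`Σ = diagonal σ`) with all singular values `σ i ∈ (0, √3)`.  Then every Björck iterate has
the same singular vectors with singular values transformed by `g(σ) = σ(3-σ²)/2`, the
singular values converge to `1`, the iteration converges to `U Vᵀ`, which has orthonormal
columns and is the nearest matrix with orthonormal columns to `W` (in the Frobenius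
distance). -/
theorem bjorck_convergence
    (m nn : ℕ) (W : Matrix (Fin m) (Fin nn) ℝ)
    (U : Matrix (Fin m) (Fin nn) ℝ) (V : Matrix (Fin nn) (Fin nn) ℝ)
    (σ : Fin nn → ℝ)
    (hU : Uᵀ * U = 1) (hV : Vᵀ * V = 1) (hV' : V * Vᵀ = 1)
    (hσ : ∀ i, σ i ∈ Set.Ioo (0 : ℝ) (Real.sqrt 3))
    (hSVD : W = U * Matrix.diagonal σ * Vᵀ) :
    (∀ k, bjorck m nn W k = U * Matrix.diagonal (fun i => g^[k] (σ i)) * Vᵀ)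
      ∧ (∀ i, Tendsto (fun k => g^[k] (σ i)) atTop (nhds 1))
      ∧ Tendsto (fun k => bjorck m nn W k) atTop (nhds (U * Vᵀ))
      ∧ (U * Vᵀ)ᵀ * (U * Vᵀ) = 1
      ∧ (∀ Q : Matrix (Fin m) (Fin nn) ℝ, Qᵀ * Q = 1 →
          ∑ i, ∑ j, (W i j - (U * Vᵀ) i j) ^ 2 ≤ ∑ i, ∑ j, (W i j - Q i j) ^ 2) := by
  subst hSVD
  have hP : (U * Vᵀ)ᵀ * (U * Vᵀ) = 1 := transpose_mul_self_mul hU (by rwa [transpose_transpose])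
  have hlim : ∀ i, Tendsto (fun k => g^[k] (σ i)) atTop (nhds 1) :=
    fun i => tendsto_iterate_g (hσ i)
  refine ⟨bjorck_svd hU hV σ, hlim, ?_, hP, fun Q hQ => ?_⟩
  · simpa only [bjorck_svd hU hV σ] using tendsto_svd_of_tendsto hlim
  · rw [sum_sum_sq_sub_of_orthonormal _ hP, sum_sum_sq_sub_of_orthonormal _ hQ]
    linarith [trace_transpose_svd_mul_le hU hV (fun i => (hσ i).1.le) hQ]

end Stmt16
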